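/- (Quasi-tiling theorem, Ornstein–Weiss.) Let G be a group generated by a finite symmetric set S and let (F_m) be a Følner exhaustion of G. Then for every ε with 0 < ε < 1 and every n ∈ ℕ there exist L ∈ ℕ, δ > 0, and indices n < n_1 < n_2 < ⋯ < n_s with F_{n_i} ⊆ B_L for all i, such that: every nonempty finite subset Y ⊆ G with |Ω_L(Y)| > (1−δ)|Y| admits a finite family of tiles of the form F_{n_{i(j)}} · x_j (right translates, with i(j) ∈ {1,…,s} and centers x_j ∈ Ω_L(Y), so that each tile is contained in Y) which is ε-disjoint and (1−ε)-covers Y. -/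

import Mathlib

open Pointwise Filter Topology

section Defs

variable {G : Type*} [Group G]

/-- The word ball of radius `k` with respect to the generating set `S`. -/
noncomputable def wball (S : Finset G) (k : ℕ) : Finset G :=
  letI := Classical.decEq G
  (insert (1 : G) S) ^ k

/-- The `k`-neighborhood `B_k(F) = B_k * F` of a finite set `F`. -/
noncomputable def wnbhd (S : Finset G) (k : ℕ) (F : Finset G) : Finset G :=
  letI := Classical.decEq G
  wball S k * F

/-- The `k`-interior `Ω_k(F)` of a finite set `F`. -/
noncomputable def winter (S : Finset G) (k : ℕ) (F : Finset G) : Finset G :=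
  letI := Classical.decEq G
  F.filter fun p => wball S k * {p} ⊆ F

/-- The boundary `∂F` of a finite set `F`. -/
noncomputable def wbdry (S : Finset G) (F : Finset G) : Finset G :=
  letI := Classical.decEq G
  F.filter fun p => ∃ s ∈ S, s * p ∉ F

/-- `S` is a finite symmetric generating set. -/
def IsSymmGen (S : Finset G) : Prop :=
  (∀ s ∈ S, s⁻¹ ∈ S) ∧ Subgroup.closure (S : Set G) = ⊤

/-- A Følner exhaustion of `G`. -/
def IsFolnerExhaustion (S : Finset G) (F : ℕ → Finset G) : Prop :=
  (1 : G) ∈ F 0 ∧ Monotone F ∧ (∀ g : G, ∃ n, g ∈ F n) ∧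
    Filter.Tendsto (fun n => ((wbdry S (F n)).card : ℝ) / ((F n).card : ℝ))
      Filter.atTop (nhds 0)

variable {d : ℕ}

/-- The space of vectors supported in `Fs` such that `A.mulVec f` vanishes on `Fv`. -/
noncomputable def kerOn (A : Matrix (Fin d) (Fin d) (MonoidAlgebra ℂ G))
    (Fs Fv : Finset G) : Submodule ℂ (Fin d → MonoidAlgebra ℂ G) where
  carrier := {f | (∀ i, (f i).coeff.support ⊆ Fs) ∧ ∀ i, ∀ g ∈ Fv, (A.mulVec f i).coeff g = 0}
  zero_mem' := ⟨fun i => by simp, fun i g hg => by simp [Matrix.mulVec_zero]⟩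
  add_mem' := by
    classical
    rintro f g ⟨hf1, hf2⟩ ⟨hg1, hg2⟩
    constructor
    · intro i
      exact (Finsupp.support_add (g₁ := (f i).coeff) (g₂ := (g i).coeff)).trans
        (Finset.union_subset (hf1 i) (hg1 i))
    · intro i x hx
      have h : A.mulVec (f + g) = A.mulVec f + A.mulVec g := Matrix.mulVec_add A f g
      rw [h]
      show ((A.mulVec f i).coeff + (A.mulVec g i).coeff) x = 0
      rw [Finsupp.add_apply, hf2 i x hx, hg2 i x hx, add_zero]
  smul_mem' := by
    classical
    rintro c f ⟨hf1, hf2⟩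
    constructor
    · intro i
      exact (Finsupp.support_smul (b := c) (g := (f i).coeff)).trans (hf1 i)
    · intro i x hx
      have h : A.mulVec (c • f) = c • A.mulVec f := Matrix.mulVec_smul A c f
      rw [h]
      show (c • (A.mulVec f i).coeff) x = 0
      rw [Finsupp.smul_apply, hf2 i x hx, smul_zero]

/-- The space of vectors supported in `Fs` with `A.mulVec f = 0`. -/
noncomputable def kerAll (A : Matrix (Fin d) (Fin d) (MonoidAlgebra ℂ G))
    (Fs : Finset G) : Submodule ℂ (Fin d → MonoidAlgebra ℂ G) where
  carrier := {f | (∀ i, (f i).coeff.support ⊆ Fs) ∧ A.mulVec f = 0}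
  zero_mem' := ⟨fun i => by simp, Matrix.mulVec_zero A⟩
  add_mem' := by
    classical
    rintro f g ⟨hf1, hf2⟩ ⟨hg1, hg2⟩
    exact ⟨fun i => (Finsupp.support_add (g₁ := (f i).coeff) (g₂ := (g i).coeff)).trans
      (Finset.union_subset (hf1 i) (hg1 i)),
      by rw [Matrix.mulVec_add, hf2, hg2, add_zero]⟩
  smul_mem' := by
    classical
    rintro c f ⟨hf1, hf2⟩
    exact ⟨fun i => (Finsupp.support_smul (b := c) (g := (f i).coeff)).trans (hf1 i),
      by rw [Matrix.mulVec_smul, hf2, smul_zero]⟩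

/-- `V(F)`. -/
noncomputable def VSpace (A : Matrix (Fin d) (Fin d) (MonoidAlgebra ℂ G)) (F : Finset G) :
    Submodule ℂ (Fin d → MonoidAlgebra ℂ G) :=
  kerOn A F F

/-- `Z(F)`. -/
noncomputable def ZSpace (S : Finset G) (w : ℕ) (A : Matrix (Fin d) (Fin d) (MonoidAlgebra ℂ G))
    (F : Finset G) : Submodule ℂ (Fin d → MonoidAlgebra ℂ G) :=
  kerOn A (wnbhd S w F) F

/-- `W(F)`. -/
noncomputable def WSpace (S : Finset G) (w : ℕ) (A : Matrix (Fin d) (Fin d) (MonoidAlgebra ℂ G))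
    (F : Finset G) : Submodule ℂ (Fin d → MonoidAlgebra ℂ G) :=
  kerAll A (winter S w F)

/-- `A.mulVec` as a `ℂ`-linear map. -/
noncomputable def mulVecL {R : Type*} [Ring R] [Algebra ℂ R] {d : ℕ}
    (A : Matrix (Fin d) (Fin d) R) : (Fin d → R) →ₗ[ℂ] (Fin d → R) where
  toFun := A.mulVec
  map_add' := Matrix.mulVec_add A
  map_smul' c v := Matrix.mulVec_smul A c v

/-- Coordinatewise restriction to `F` (multiplication by the indicator of `F`). -/
noncomputable def restrictTo (d : ℕ) (F : Finset G) :
    (Fin d → MonoidAlgebra ℂ G) →ₗ[ℂ] (Fin d → MonoidAlgebra ℂ G) :=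
  letI := Classical.decEq G
  { toFun := fun f i => MonoidAlgebra.ofCoeff ((f i).coeff.filter (· ∈ F))
    map_add' := fun f g => by
      funext i
      exact congrArg MonoidAlgebra.ofCoeff Finsupp.filter_add
    map_smul' := fun c f => by
      funext i
      exact congrArg MonoidAlgebra.ofCoeff Finsupp.filter_smul }

end Defs

section Tiling

variable {ι α : Type*}

/-- An `ε`-disjoint family of finite sets. -/
def EpsDisjoint (I : Finset ι) (A : ι → Finset α) (ε : ℝ) : Prop :=
  ∃ Ab : ι → Finset α, (∀ i ∈ I, Ab i ⊆ A i) ∧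
    (∀ i ∈ I, ((1 - ε) * (A i).card : ℝ) ≤ ((Ab i).card : ℝ)) ∧
    ∀ i ∈ I, ∀ j ∈ I, i ≠ j → Disjoint (Ab i) (Ab j)

/-- The family `(A i)_{i ∈ I}` `a`-covers `X`. -/
def CoversFrac (I : Finset ι) (A : ι → Finset α) (X : Finset α) (a : ℝ) : Prop :=
  letI := Classical.decEq α
  (a * X.card : ℝ) ≤ ((X ∩ I.biUnion A).card : ℝ)

/-- The family `(A i)_{i ∈ I}` `δ`-evenly covers `X`. -/
def EvenCovering (I : Finset ι) (A : ι → Finset α) (X : Finset α) (δ : ℝ) : Prop :=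
  letI := Classical.decEq α
  ∃ M : ℕ, 1 ≤ M ∧ (∀ p ∈ X, (I.filter fun i => p ∈ A i).card ≤ M) ∧
    ((1 - δ) * M * X.card : ℝ) ≤ ∑ i ∈ I, ((A i).card : ℝ)

/-- The right translate `H·x`. -/
noncomputable def rtrans [Mul α] (H : Finset α) (x : α) : Finset α :=
  letI := Classical.decEq α
  H.image (· * x)

end Tiling

section Supp

variable {G : Type*} [Group G]

/-- Vectors all of whose coordinates are supported in `F`. -/
noncomputable def suppIn (d : ℕ) (F : Finset G) :
    Submodule ℂ (Fin d → MonoidAlgebra ℂ G) where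
  carrier := {f | ∀ i, (f i).coeff.support ⊆ F}
  zero_mem' := fun i => by simp
  add_mem' := by
    classical
    intro f g hf hg i
    exact (Finsupp.support_add (g₁ := (f i).coeff) (g₂ := (g i).coeff)).trans
      (Finset.union_subset (hf i) (hg i))
  smul_mem' := fun c f hf i => (Finsupp.support_smul (b := c) (g := (f i).coeff)).trans (hf i)

end Supp

/-!
Take Følner sets `T₀, …, T_{k-1}` at scales so far apart that `Tⱼ` is almost invariant under
left multiplication by `Tᵢ⁻¹` for `i < j`, all inside the ball `B_L`. Tiles are laid down in `Y`
largest scale first. In each round the centres are taken in the `L`-interior with tiles avoiding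
everything placed so far; almost invariance shows few centres are blocked by earlier tiles, and
a greedy choice (keep a tile while at most an `ε`-fraction of it is already covered) together
with double counting covers an `ε/2`-fraction of what is still uncovered. After `k` rounds with
`(1 - ε/2)^k ≤ ε`, at most an `ε`-fraction of `Y` is left.
-/

open Finset

attribute [local instance 10] Classical.decEq

section EpsDisjoint

variable {ι κ α : Type*} {ε : ℝ}

theorem EpsDisjoint.mono {I : Finset ι} {A : ι → Finset α} {ε' : ℝ} (h : EpsDisjoint I A ε)
    (hε : ε ≤ ε') : EpsDisjoint I A ε' := by
  obtain ⟨B, hBA, hcard, hdisj⟩ := h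
  refine ⟨B, hBA, fun i hi => le_trans ?_ (hcard i hi), hdisj⟩
  exact mul_le_mul_of_nonneg_right (by linarith) (Nat.cast_nonneg _)

theorem EpsDisjoint.union [DecidableEq ι] {I J : Finset ι} {A : ι → Finset α}
    (hI : EpsDisjoint I A ε) (hJ : EpsDisjoint J A ε)
    (hIJ : ∀ i ∈ I, ∀ j ∈ J, Disjoint (A i) (A j)) : EpsDisjoint (I ∪ J) A ε := by
  obtain ⟨B, hBA, hBcard, hBdisj⟩ := hI
  obtain ⟨C, hCA, hCcard, hCdisj⟩ := hJ
  have mem_J {i} (hi : i ∈ I ∪ J) (hiI : i ∉ I) : i ∈ J := (mem_union.1 hi).resolve_left hiI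
  refine ⟨fun i => if i ∈ I then B i else C i, fun i hi => ?_, fun i hi => ?_, ?_⟩
  · dsimp only
    split_ifs with hiI
    exacts [hBA i hiI, hCA i (mem_J hi hiI)]
  · dsimp only
    split_ifs with hiI
    exacts [hBcard i hiI, hCcard i (mem_J hi hiI)]
  · intro i hi j hj hij
    dsimp only
    split_ifs with hiI hjI hjI
    · exact hBdisj i hiI j hjI hij
    · exact (hIJ i hiI j (mem_J hj hjI)).mono (hBA i hiI) (hCA j (mem_J hj hjI))
    · exact ((hIJ j hjI i (mem_J hi hiI)).mono (hBA j hjI) (hCA i (mem_J hi hiI))).symm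
    · exact hCdisj i (mem_J hi hiI) j (mem_J hj hjI) hij

theorem EpsDisjoint.image [DecidableEq ι] {D : Finset κ} {f : κ → ι} (hf : Set.InjOn f D)
    {A : ι → Finset α} (h : EpsDisjoint D (fun d => A (f d)) ε) : EpsDisjoint (D.image f) A ε := by
  obtain ⟨B, hBA, hcard, hdisj⟩ := h
  set B' : ι → Finset α := fun i => if h : ∃ d ∈ D, f d = i then B h.choose else ∅
  have hB' : ∀ d ∈ D, B' (f d) = B d := by
    intro d hd
    have h : ∃ d' ∈ D, f d' = f d := ⟨d, hd, rfl⟩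
    simp only [B', dif_pos h, hf h.choose_spec.1 hd h.choose_spec.2]
  refine ⟨B', ?_, ?_, ?_⟩ <;> simp only [mem_image, forall_exists_index, and_imp,
    forall_apply_eq_imp_iff₂]
  · intro d hd
    exact hB' d hd ▸ hBA d hd
  · intro d hd
    exact hB' d hd ▸ hcard d hd
  · intro d hd d' hd' hne
    rw [hB' d hd, hB' d' hd']
    exact hdisj d hd d' hd' (fun h => hne (h ▸ rfl))

theorem EpsDisjoint.one_sub_mul_sum_card_le [DecidableEq α] {I : Finset ι} {A : ι → Finset α}
    (h : EpsDisjoint I A ε) : (1 - ε) * ∑ i ∈ I, ((A i).card : ℝ) ≤ (I.biUnion A).card := by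
  obtain ⟨B, hBA, hcard, hdisj⟩ := h
  calc (1 - ε) * ∑ i ∈ I, ((A i).card : ℝ) = ∑ i ∈ I, (1 - ε) * ((A i).card : ℝ) := mul_sum ..
    _ ≤ ∑ i ∈ I, ((B i).card : ℝ) := sum_le_sum hcard
    _ = (I.biUnion B).card := by rw [card_biUnion hdisj]; push_cast; rfl
    _ ≤ (I.biUnion A).card := by
      exact_mod_cast card_le_card (biUnion_mono hBA)

theorem EpsDisjoint.exists_fin_reindex {I : Finset ι} {A : ι → Finset α} (h : EpsDisjoint I A ε) :
    ∃ (m : ℕ) (e : Fin m → ι), (∀ j, e j ∈ I) ∧ EpsDisjoint univ (fun j => A (e j)) ε ∧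
      univ.biUnion (fun j => A (e j)) = I.biUnion A := by
  obtain ⟨B, hBA, hcard, hdisj⟩ := h
  refine ⟨I.card, fun j => I.equivFin.symm j, fun j => (I.equivFin.symm j).2,
    ⟨fun j => B (I.equivFin.symm j), fun j _ => hBA _ (I.equivFin.symm j).2,
      fun j _ => hcard _ (I.equivFin.symm j).2, fun j _ j' _ hjj' => hdisj _ (I.equivFin.symm j).2
        _ (I.equivFin.symm j').2 ?_⟩, ?_⟩
  · exact fun h => hjj' (I.equivFin.symm.injective (Subtype.ext h))
  · ext x
    simp only [mem_biUnion, mem_univ, true_and]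
    exact ⟨fun ⟨j, hj⟩ => ⟨_, (I.equivFin.symm j).2, hj⟩,
      fun ⟨i, hi, hx⟩ => ⟨I.equivFin ⟨i, hi⟩, by simpa using hx⟩⟩

theorem coversFrac_one_sub_iff {I : Finset ι} {A : ι → Finset α} {X : Finset α} :
    CoversFrac I A X (1 - ε) ↔ ((X \ I.biUnion A).card : ℝ) ≤ ε * X.card := by
  have h := card_inter_add_card_sdiff X (I.biUnion A)
  unfold CoversFrac
  constructor <;> intro h' <;> rw [← h] at * <;> push_cast at * <;> linarith

end EpsDisjoint

section Greedy

variable {ι α : Type*} [DecidableEq ι] [DecidableEq α] {ε : ℝ}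

theorem exists_greedy_subfamily (A : ι → Finset α) (hε1 : ε ≤ 1)
    (C : Finset ι) (U : Finset α) :
    ∃ D ⊆ C, ∃ B : ι → Finset α, (∀ d ∈ D, B d ⊆ A d \ U) ∧
      (∀ d ∈ D, (1 - ε) * ((A d).card : ℝ) ≤ (B d).card) ∧
      (∀ d ∈ D, ∀ d' ∈ D, d ≠ d' → Disjoint (B d) (B d')) ∧
      ∀ c ∈ C, ε * ((A c).card : ℝ) ≤ (A c ∩ (U ∪ D.biUnion A)).card := by
  induction C using Finset.strongInduction generalizing U with | _ C ih
  by_cases hfree : ∃ c ∈ C, ((A c ∩ U).card : ℝ) ≤ ε * (A c).card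
  swap
  · push Not at hfree
    refine ⟨∅, empty_subset _, fun _ => ∅, by simp, by simp, by simp, fun c hc => ?_⟩
    simpa using (hfree c hc).le
  obtain ⟨c, hcC, hc⟩ := hfree
  obtain ⟨D, hDC, B, hBA, hBcard, hBdisj, hcover⟩ :=
    ih (C.erase c) (erase_ssubset hcC) (U ∪ A c)
  have hcD : c ∉ D := fun h => (mem_erase.1 (hDC h)).1 rfl
  have hB_ne {d} (hd : d ∈ D) : Function.update B c (A c \ U) d = B d :=
    Function.update_of_ne (by rintro rfl; exact hcD hd) _ _
  have hU : U ∪ A c ∪ D.biUnion A = U ∪ (insert c D).biUnion A := by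
    rw [biUnion_insert, union_assoc]
  refine ⟨insert c D, insert_subset hcC (hDC.trans (erase_subset c C)),
    Function.update B c (A c \ U), ?_, ?_, ?_, ?_⟩
  · intro d hd
    rcases mem_insert.1 hd with rfl | hd
    · simp
    · rw [hB_ne hd]
      exact (hBA d hd).trans (sdiff_subset_sdiff subset_rfl subset_union_left)
  · intro d hd
    rcases mem_insert.1 hd with rfl | hd
    · have h := card_sdiff_add_card_inter (A d) U
      rw [Function.update_self]
      rw [← h] at hc ⊢; push_cast at hc ⊢; linarith
    · rw [hB_ne hd]; exact hBcard d hd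
  · have hfresh : ∀ d ∈ D, Disjoint (A c \ U) (B d) := fun d hd =>
      (disjoint_sdiff_self_right.mono_right ((hBA d hd).trans
        (sdiff_subset_sdiff subset_rfl subset_union_right))).mono_left sdiff_subset
    intro d hd d' hd' hne
    rcases mem_insert.1 hd with rfl | hdD <;> rcases mem_insert.1 hd' with rfl | hd'D
    · exact absurd rfl hne
    · rw [Function.update_self, hB_ne hd'D]; exact hfresh d' hd'D
    · rw [Function.update_self, hB_ne hdD]; exact (hfresh d hdD).symm
    · rw [hB_ne hdD, hB_ne hd'D]; exact hBdisj d hdD d' hd'D hne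
  · intro c' hc'
    by_cases hcc' : c' = c
    · subst hcc'
      rw [inter_eq_left.2 ((subset_biUnion_of_mem A (mem_insert_self c' D)).trans
        subset_union_right)]
      exact mul_le_of_le_one_left (Nat.cast_nonneg _) hε1
    · rw [← hU]
      exact hcover c' (mem_erase.2 ⟨hcc', hc'⟩)

theorem exists_epsDisjoint_subfamily (A : ι → Finset α) (hε1 : ε ≤ 1)
    (C : Finset ι) : ∃ D ⊆ C, EpsDisjoint D A ε ∧
      ∀ c ∈ C, ε * ((A c).card : ℝ) ≤ (A c ∩ D.biUnion A).card := by
  obtain ⟨D, hDC, B, hBA, hBcard, hBdisj, hcover⟩ := exists_greedy_subfamily A hε1 C ∅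
  refine ⟨D, hDC, ⟨B, fun d hd => by simpa using hBA d hd, hBcard, hBdisj⟩, fun c hc => ?_⟩
  simpa using hcover c hc

end Greedy

section WordBall

variable {G : Type*} [Group G] (S : Finset G)

theorem wball_add (a b : ℕ) : wball S (a + b) = wball S a * wball S b := pow_add _ a b

theorem wball_succ (r : ℕ) : wball S (r + 1) = insert 1 S * wball S r := pow_succ' _ r

theorem one_mem_wball (r : ℕ) : (1 : G) ∈ wball S r := one_mem_pow (mem_insert_self 1 S)

theorem wball_mono : Monotone (wball S) := fun _ _ => pow_subset_pow_right (mem_insert_self 1 S)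

theorem insert_one_subset_wball {r : ℕ} (hr : r ≠ 0) : insert 1 S ⊆ wball S r :=
  subset_pow (mem_insert_self 1 S) hr

theorem inv_wball (hS : ∀ s ∈ S, s⁻¹ ∈ S) (r : ℕ) : (wball S r)⁻¹ = wball S r := by
  have hS' : S⁻¹ = S := by
    apply coe_injective
    rw [coe_inv, Set.inv_eq_self_iff_inv_subset]
    exact fun s hs => by simpa using hS _ hs
  unfold wball
  rw [← inv_pow, inv_insert, inv_one, hS']

theorem exists_mem_wball (hS : IsSymmGen S) (g : G) : ∃ r, g ∈ wball S r := by
  have hg : g ∈ Subgroup.closure (S : Set G) := hS.2 ▸ Subgroup.mem_top g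
  induction hg using Subgroup.closure_induction with
  | mem s hs => exact ⟨1, insert_one_subset_wball S one_ne_zero (mem_insert_of_mem hs)⟩
  | one => exact ⟨0, one_mem_wball S 0⟩
  | mul x y _ _ hx hy =>
    obtain ⟨a, ha⟩ := hx
    obtain ⟨b, hb⟩ := hy
    exact ⟨a + b, wball_add S a b ▸ mul_mem_mul ha hb⟩
  | inv x _ hx =>
    obtain ⟨a, ha⟩ := hx
    exact ⟨a, inv_wball S hS.1 a ▸ inv_mem_inv ha⟩

theorem exists_subset_wball (hS : IsSymmGen S) (T : Finset G) : ∃ r, T ⊆ wball S r := by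
  choose r hr using exists_mem_wball S hS
  exact ⟨T.sup r, fun g hg => wball_mono S (le_sup hg) (hr g)⟩

theorem wball_mul_sdiff_subset (r : ℕ) (F : Finset G) :
    (wball S r * F) \ F ⊆ wball S r * wbdry S F := by
  induction r with
  | zero => simp [wball]
  | succ r ih =>
    intro x hx
    obtain ⟨hxB, hxF⟩ := mem_sdiff.1 hx
    rw [wball_succ, mul_assoc] at hxB
    obtain ⟨a, ha, y, hy, rfl⟩ := mem_mul.1 hxB
    rw [wball_succ, mul_assoc]
    by_cases hyF : y ∈ F
    · have haS : a ∈ S :=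
        (mem_insert.1 ha).resolve_left (by rintro rfl; exact hxF (by simpa using hyF))
      have hyb : y ∈ wbdry S F := by
        unfold wbdry
        exact mem_filter.2 ⟨hyF, a, haS, hxF⟩
      simpa using mul_mem_mul ha (mul_mem_mul (one_mem_wball S r) hyb)
    · exact mul_mem_mul ha (ih (mem_sdiff.2 ⟨hy, hyF⟩))

theorem card_wball_mul_sdiff_le (r : ℕ) (F : Finset G) :
    ((wball S r * F) \ F).card ≤ (wball S r).card * (wbdry S F).card :=
  (card_le_card (wball_mul_sdiff_subset S r F)).trans card_mul_le

end WordBall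

section Folner

variable {G : Type*} [Group G] {S : Finset G} {F : ℕ → Finset G}

theorem IsFolnerExhaustion.exists_card_wball_mul_sdiff_le (hF : IsFolnerExhaustion S F)
    (r : ℕ) {η : ℝ} (hη : 0 < η) (N : ℕ) :
    ∃ m, N < m ∧ (((wball S r * F m) \ F m).card : ℝ) ≤ η * (F m).card := by
  have hB : (0 : ℝ) < (wball S r).card := by
    exact_mod_cast card_pos.2 ⟨1, one_mem_wball S r⟩
  obtain ⟨a, ha⟩ := eventually_atTop.1 (hF.2.2.2.eventually (gt_mem_nhds (div_pos hη hB)))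
  set m := max (N + 1) a
  have hFm : (0 : ℝ) < (F m).card := by
    exact_mod_cast card_pos.2 ⟨1, hF.2.1 (Nat.zero_le m) hF.1⟩
  have hbdry : ((wbdry S (F m)).card : ℝ) ≤ η / (wball S r).card * (F m).card :=
    ((div_lt_iff₀ hFm).1 (ha m (le_max_right _ _))).le
  refine ⟨m, by omega, ?_⟩
  calc (((wball S r * F m) \ F m).card : ℝ) ≤ (wball S r).card * (wbdry S (F m)).card := by
        exact_mod_cast card_wball_mul_sdiff_le S r (F m)
    _ ≤ (wball S r).card * (η / (wball S r).card * (F m).card) := by gcongr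
    _ = η * (F m).card := by field_simp

theorem IsFolnerExhaustion.exists_scales (hS : IsSymmGen S) (hF : IsFolnerExhaustion S F)
    {η : ℝ} (hη : 0 < η) (n : ℕ) :
    ∃ q r : ℕ → ℕ, StrictMono q ∧ (∀ j, n < q j) ∧ Monotone r ∧
      (∀ j, F (q j) ⊆ wball S (r j)) ∧
      ∀ a b, a < b → ((((F (q a))⁻¹ * F (q b)) \ F (q b)).card : ℝ) ≤ η * (F (q b)).card := by
  have step : ∀ p R : ℕ, ∃ m, p < m ∧ ∃ R', R ≤ R' ∧ F m ⊆ wball S R' ∧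
      (((wball S R * F m) \ F m).card : ℝ) ≤ η * (F m).card := by
    intro p R
    obtain ⟨m, hpm, hm⟩ := hF.exists_card_wball_mul_sdiff_le R hη p
    obtain ⟨R', hR'⟩ := exists_subset_wball S hS (F m)
    exact ⟨m, hpm, max R R', le_max_left _ _, hR'.trans (wball_mono S (le_max_right _ _)), hm⟩
  choose next hnext rad hrad hsub hinv using step
  -- `Q j = (index, radius)`: step `j + 1` picks a set almost invariant under the ball of
  -- radius `(Q j).2`, which contains the inverses of all sets picked before
  let Q : ℕ → ℕ × ℕ := fun j => Nat.rec (n, 0) (fun _ x => (next x.1 x.2, rad x.1 x.2)) j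
  have hQ2 : Monotone fun j => (Q j).2 := monotone_nat_of_le_succ fun j => hrad _ _
  have hq : StrictMono fun j => (Q (j + 1)).1 := strictMono_nat_of_lt_succ fun j => hnext _ _
  refine ⟨fun j => (Q (j + 1)).1, fun j => (Q (j + 1)).2, hq, fun j => ?_,
    fun a b h => hQ2 (Nat.succ_le_succ h), fun j => hsub _ _, fun a b hab => ?_⟩
  · exact (hnext n 0).trans_le (hq.monotone (Nat.zero_le j))
  · refine le_trans ?_ (hinv (Q b).1 (Q b).2)
    gcongr
    calc (F (Q (a + 1)).1)⁻¹ ⊆ (wball S (Q (a + 1)).2)⁻¹ := inv_subset_inv (hsub _ _)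
      _ = wball S (Q (a + 1)).2 := inv_wball S hS.1 _
      _ ⊆ wball S (Q b).2 := wball_mono S (hQ2 hab)

end Folner

section Translates

variable {G : Type*} [Group G]

theorem mem_mul_singleton_iff_mem_inv_mul_singleton {T : Finset G} {c w : G} :
    w ∈ T * {c} ↔ c ∈ T⁻¹ * {w} := by
  simp only [Finset.mem_mul, mem_singleton, Finset.mem_inv, exists_eq_left]
  constructor
  · rintro ⟨t, ht, rfl⟩
    exact ⟨t⁻¹, ⟨t, ht, rfl⟩, by group⟩
  · rintro ⟨_, ⟨t, ht, rfl⟩, rfl⟩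
    exact ⟨t, ht, by group⟩

theorem mem_inv_mul_sdiff_mul_singleton {T A : Finset G} {c x y : G} (hyc : y ∈ T * {c})
    (hyx : y ∈ A * {x}) (hc : c ∉ A * {x}) : c ∈ ((T⁻¹ * A) \ A) * {x} := by
  rw [mem_mul_singleton_iff_mem_inv_mul_singleton] at hyc
  simp only [Finset.mem_mul, mem_singleton, exists_eq_left] at *
  obtain ⟨t, ht, rfl⟩ := hyc
  obtain ⟨a, ha, rfl⟩ := hyx
  exact ⟨t * a, mem_sdiff.2 ⟨mul_mem_mul ht ha, fun h => hc ⟨t * a, h, mul_assoc ..⟩⟩,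
    mul_assoc ..⟩

theorem exists_epsDisjoint_translates {T : Finset G} (hT : T.Nonempty) {ε : ℝ} (hε : ε ≤ 1)
    (C : Finset G) : ∃ D ⊆ C, EpsDisjoint D (fun d => T * {d}) ε ∧
      ε * C.card ≤ (D.biUnion fun d => T * {d}).card := by
  obtain ⟨D, hDC, hD, hcover⟩ := exists_epsDisjoint_subfamily (fun c => T * {c}) hε C
  refine ⟨D, hDC, hD, ?_⟩
  set W := D.biUnion fun d => T * {d}
  have hT' : (0 : ℝ) < T.card := by exact_mod_cast hT.card_pos
  have key : C.card • (ε * T.card) ≤ W.card • (T.card : ℝ) := by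
    refine card_nsmul_le_card_nsmul (fun c w => w ∈ T * {c}) (fun c hc => ?_) (fun w _ => ?_)
    · simpa [bipartiteAbove, filter_mem_eq_inter, inter_comm] using hcover c hc
    · calc ((C.bipartiteBelow (fun c w => w ∈ T * {c}) w).card : ℝ) ≤ (T⁻¹ * {w}).card := by
            refine Nat.cast_le.2 (card_le_card fun c hc => ?_)
            exact mem_mul_singleton_iff_mem_inv_mul_singleton.1 ((mem_bipartiteBelow _).1 hc).2
        _ = T.card := by rw [card_mul_singleton, card_inv]
  rw [nsmul_eq_mul, nsmul_eq_mul] at key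
  nlinarith

end Translates

section Tiling

variable {G κ : Type*} [Group G] {ε : ℝ}

noncomputable def tile (T : κ → Finset G) (p : κ × G) : Finset G := T p.1 * {p.2}

variable {T : κ → Finset G} {Y C₀ : Finset G}

theorem exists_small_superset_of_blocked_centers (hε0 : 0 < ε) (hε2 : ε ≤ 1 / 2) {i : κ}
    {P : Finset (κ × G)} (hP : EpsDisjoint P (tile T) ε) (hPY : P.biUnion (tile T) ⊆ Y)
    (hPinv : ∀ p ∈ P, ((((T i)⁻¹ * T p.1) \ T p.1).card : ℝ) ≤ ε / 8 * (T p.1).card) :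
    ∃ B : Finset G, (B.card : ℝ) ≤ ε / 4 * Y.card ∧ ∀ c ∉ P.biUnion (tile T),
      ¬Disjoint (T i * {c}) (P.biUnion (tile T)) → c ∈ B := by
  refine ⟨P.biUnion fun p => (((T i)⁻¹ * T p.1) \ T p.1) * {p.2}, ?_, fun c hcU hmeet => ?_⟩
  · have hsum : ∑ p ∈ P, ((tile T p).card : ℝ) ≤ 2 * Y.card := by
      have hY : ((P.biUnion (tile T)).card : ℝ) ≤ Y.card := by exact_mod_cast card_le_card hPY
      have := hP.one_sub_mul_sum_card_le
      have : 0 ≤ ∑ p ∈ P, ((tile T p).card : ℝ) := sum_nonneg fun _ _ => Nat.cast_nonneg _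
      nlinarith
    calc _ ≤ ∑ p ∈ P, (((((T i)⁻¹ * T p.1) \ T p.1) * {p.2}).card : ℝ) := by
          exact_mod_cast card_biUnion_le
      _ ≤ ∑ p ∈ P, ε / 8 * ((tile T p).card : ℝ) := sum_le_sum fun p hp => by
          simpa only [tile, card_mul_singleton] using hPinv p hp
      _ = ε / 8 * ∑ p ∈ P, ((tile T p).card : ℝ) := (mul_sum ..).symm
      _ ≤ ε / 8 * (2 * Y.card) := by gcongr
      _ = ε / 4 * Y.card := by ring
  · obtain ⟨y, hyc, hyU⟩ := not_disjoint_iff.1 hmeet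
    obtain ⟨p, hp, hyp⟩ := mem_biUnion.1 hyU
    exact mem_biUnion.2 ⟨p, hp, mem_inv_mul_sdiff_mul_singleton hyc hyp
      fun h => hcU (mem_biUnion.2 ⟨p, hp, h⟩)⟩

theorem exists_tiling_step [DecidableEq κ] (hε0 : 0 < ε) (hε2 : ε ≤ 1 / 2)
    (htile : ∀ c ∈ C₀, ∀ i, T i * {c} ⊆ Y) (hC₀ : ((Y \ C₀).card : ℝ) ≤ ε / 8 * Y.card)
    {i : κ} (hi : (T i).Nonempty) {P : Finset (κ × G)} (hP : EpsDisjoint P (tile T) ε)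
    (hPC : ∀ p ∈ P, p.2 ∈ C₀)
    (hPinv : ∀ p ∈ P, ((((T i)⁻¹ * T p.1) \ T p.1).card : ℝ) ≤ ε / 8 * (T p.1).card)
    (hZ : ε * Y.card < (Y \ P.biUnion (tile T)).card) :
    ∃ D ⊆ C₀, EpsDisjoint (P ∪ D.image (i, ·)) (tile T) ε ∧
      ((Y \ (P ∪ D.image (i, ·)).biUnion (tile T)).card : ℝ) ≤
        (1 - ε / 2) * (Y \ P.biUnion (tile T)).card := by
  set U := P.biUnion (tile T)
  set Z := Y \ U
  have hUY : U ⊆ Y := biUnion_subset.2 fun p hp => htile p.2 (hPC p hp) p.1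
  obtain ⟨B, hB, hmeet⟩ := exists_small_superset_of_blocked_centers hε0 hε2 hP hUY hPinv
  set C₁ := (C₀ ∩ Z).filter fun c => Disjoint (T i * {c}) U
  have hC₁ : (Z.card : ℝ) ≤ 2 * C₁.card := by
    have hZ' : Z ⊆ (Y \ C₀) ∪ (C₁ ∪ B) := by
      intro c hc
      by_cases hc₀ : c ∈ C₀
      · by_cases hcU : Disjoint (T i * {c}) U
        · exact mem_union_right _ (mem_union_left _ (mem_filter.2 ⟨mem_inter.2 ⟨hc₀, hc⟩, hcU⟩))
        · exact mem_union_right _ (mem_union_right _ (hmeet c (mem_sdiff.1 hc).2 hcU))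
      · exact mem_union_left _ (mem_sdiff.2 ⟨(mem_sdiff.1 hc).1, hc₀⟩)
    have : (Z.card : ℝ) ≤ (Y \ C₀).card + (C₁.card + B.card) := by
      exact_mod_cast (card_le_card hZ').trans
        ((card_union_le _ _).trans (Nat.add_le_add_left (card_union_le _ _) _))
    -- `|Y \ C₀| + |B| ≤ 3ε|Y|/8 < 3|Z|/8`
    nlinarith
  obtain ⟨D, hDC₁, hD, hW⟩ := exists_epsDisjoint_translates hi (by linarith : ε ≤ 1) C₁
  set W := D.biUnion fun d => T i * {d}
  have hDC₀ : D ⊆ C₀ := fun d hd => (mem_inter.1 (mem_filter.1 (hDC₁ hd)).1).1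
  have hWZ : W ⊆ Z := biUnion_subset.2 fun d hd =>
    subset_sdiff.2 ⟨htile d (hDC₀ hd) i, (mem_filter.1 (hDC₁ hd)).2⟩
  refine ⟨D, hDC₀, hP.union (hD.image (Prod.mk_right_injective i).injOn) ?_, ?_⟩
  · intro p hp q hq
    obtain ⟨d, hd, rfl⟩ := mem_image.1 hq
    exact ((mem_filter.1 (hDC₁ hd)).2.symm).mono_left (subset_biUnion_of_mem _ hp)
  · have hYZ : Y \ (U ∪ W) = Z \ W := (sdiff_sdiff_left ..).symm
    rw [union_biUnion, image_biUnion]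
    change ((Y \ (U ∪ W)).card : ℝ) ≤ _
    rw [hYZ, card_sdiff_of_subset hWZ, Nat.cast_sub (card_le_card hWZ)]
    nlinarith

theorem exists_epsDisjoint_tiling (hε0 : 0 < ε) (hε2 : ε ≤ 1 / 2) {k : ℕ}
    {T : Fin k → Finset G} (hT : ∀ i, (T i).Nonempty)
    (hinv : ∀ i j, i < j → ((((T i)⁻¹ * T j) \ T j).card : ℝ) ≤ ε / 8 * (T j).card)
    (htile : ∀ c ∈ C₀, ∀ i, T i * {c} ⊆ Y) (hC₀ : ((Y \ C₀).card : ℝ) ≤ ε / 8 * Y.card)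
    (hk : (1 - ε / 2) ^ k ≤ ε) :
    ∃ P : Finset (Fin k × G), EpsDisjoint P (tile T) ε ∧ (∀ p ∈ P, p.2 ∈ C₀) ∧
      ((Y \ P.biUnion (tile T)).card : ℝ) ≤ ε * Y.card := by
  -- after `j` steps only the `j` largest scales have been used
  suffices h : ∀ j ≤ k, ∃ P : Finset (Fin k × G), (∀ p ∈ P, k ≤ p.1 + j) ∧
      EpsDisjoint P (tile T) ε ∧ (∀ p ∈ P, p.2 ∈ C₀) ∧
      ((Y \ P.biUnion (tile T)).card : ℝ) ≤ max (ε * Y.card) ((1 - ε / 2) ^ j * Y.card) by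
    obtain ⟨P, -, hP, hPC, hPY⟩ := h k le_rfl
    exact ⟨P, hP, hPC, hPY.trans (max_le le_rfl (by gcongr))⟩
  intro j
  induction j with
  | zero =>
    intro _
    exact ⟨∅, by simp, ⟨fun _ => ∅, by simp, by simp, by simp⟩, by simp, by simp⟩
  | succ j ih =>
    intro hj
    obtain ⟨P, hPk, hP, hPC, hPY⟩ := ih (by omega)
    by_cases hZ : ((Y \ P.biUnion (tile T)).card : ℝ) ≤ ε * Y.card
    · exact ⟨P, fun p hp => by have := hPk p hp; omega, hP, hPC, hZ.trans (le_max_left _ _)⟩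
    push Not at hZ
    let i : Fin k := ⟨k - (j + 1), by omega⟩
    obtain ⟨D, hDC, hD, hDY⟩ := exists_tiling_step hε0 hε2 htile hC₀ (hT i) hP hPC
      (fun p hp => hinv i p.1 (by have := hPk p hp; change k - (j + 1) < (p.1 : ℕ); omega)) hZ
    refine ⟨P ∪ D.image (i, ·), fun p hp => ?_, hD, fun p hp => ?_, ?_⟩
    · rcases mem_union.1 hp with hp | hp
      · have := hPk p hp; omega
      · obtain ⟨d, -, rfl⟩ := mem_image.1 hp
        change k ≤ k - (j + 1) + (j + 1); omega
    · rcases mem_union.1 hp with hp | hp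
      · exact hPC p hp
      · obtain ⟨d, hd, rfl⟩ := mem_image.1 hp
        exact hDC hd
    · have hZj : ((Y \ P.biUnion (tile T)).card : ℝ) ≤ (1 - ε / 2) ^ j * Y.card :=
        (le_max_iff.1 hPY).resolve_left hZ.not_ge
      refine hDY.trans (le_max_of_le_right ?_)
      calc (1 - ε / 2) * ((Y \ P.biUnion (tile T)).card : ℝ)
          ≤ (1 - ε / 2) * ((1 - ε / 2) ^ j * Y.card) := by gcongr; linarith
        _ = (1 - ε / 2) ^ (j + 1) * Y.card := by ring

end Tiling

section Interior

variable {G : Type*} [Group G] {S : Finset G} {L : ℕ} {Y : Finset G}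

theorem winter_subset : winter S L Y ⊆ Y := filter_subset _ _

theorem mul_singleton_subset_of_mem_winter {H : Finset G} {c : G} (hc : c ∈ winter S L Y)
    (hH : H ⊆ wball S L) : H * {c} ⊆ Y :=
  (mul_subset_mul_right hH).trans (mem_filter.1 hc).2

theorem card_sdiff_winter_le {δ : ℝ} (h : (1 - δ) * Y.card < (winter S L Y).card) :
    ((Y \ winter S L Y).card : ℝ) ≤ δ * Y.card := by
  rw [card_sdiff_of_subset winter_subset, Nat.cast_sub (card_le_card winter_subset)]
  linarith

theorem rtrans_eq_mul_singleton (H : Finset G) (x : G) : rtrans H x = H * {x} :=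
  (mul_singleton x).symm

end Interior

theorem quasi_tiling_general {G : Type*} [Group G] (S : Finset G) (hS : IsSymmGen S)
    (F : ℕ → Finset G) (hF : IsFolnerExhaustion S F)
    (ε : ℝ) (hε0 : 0 < ε) (n : ℕ) :
    ∃ (L : ℕ) (δ : ℝ) (s : ℕ) (nidx : Fin s → ℕ), 0 < δ ∧ StrictMono nidx ∧
      (∀ i, n < nidx i) ∧ (∀ i, F (nidx i) ⊆ wball S L) ∧
      ∀ Y : Finset G, Y.Nonempty → ((1 - δ) * (Y.card : ℝ) < ((winter S L Y).card : ℝ)) →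
        ∃ (m : ℕ) (t : Fin m → Fin s) (ctr : Fin m → G),
          (∀ j, ctr j ∈ winter S L Y) ∧
          (∀ j, rtrans (F (nidx (t j))) (ctr j) ⊆ Y) ∧
          EpsDisjoint (Finset.univ : Finset (Fin m))
            (fun j => rtrans (F (nidx (t j))) (ctr j)) ε ∧
          CoversFrac (Finset.univ : Finset (Fin m))
            (fun j => rtrans (F (nidx (t j))) (ctr j)) Y (1 - ε) := by
  set ε' := min ε (1 / 2)
  have hε' : 0 < ε' := lt_min hε0 one_half_pos
  obtain ⟨k, hk⟩ := exists_pow_lt_of_lt_one hε' (by linarith : 1 - ε' / 2 < 1)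
  obtain ⟨q, r, hq, hqn, hr, hqr, hqinv⟩ := hF.exists_scales hS (η := ε' / 8) (by positivity) n
  have hball : ∀ i : Fin k, F (q i) ⊆ wball S (r k) := fun i =>
    (hqr i).trans (wball_mono S (hr i.2.le))
  refine ⟨r k, ε' / 8, k, fun i => q i, by positivity, hq.comp Fin.val_strictMono,
    fun i => hqn i, hball, fun Y _ hY => ?_⟩
  obtain ⟨P, hP, hPC, hPY⟩ := exists_epsDisjoint_tiling hε' (min_le_right _ _)
    (fun i => ⟨1, hF.2.1 (Nat.zero_le _) hF.1⟩) (fun i j hij => hqinv i j hij)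
    (fun c hc i => mul_singleton_subset_of_mem_winter hc (hball i)) (card_sdiff_winter_le hY)
    hk.le
  obtain ⟨m, e, heP, he, hU⟩ := (hP.mono (min_le_left _ _)).exists_fin_reindex
  refine ⟨m, fun j => (e j).1, fun j => (e j).2, fun j => hPC _ (heP j), fun j => ?_, ?_, ?_⟩
  · rw [rtrans_eq_mul_singleton]
    exact mul_singleton_subset_of_mem_winter (hPC _ (heP j)) (hball _)
  · simp only [rtrans_eq_mul_singleton]
    exact he
  · rw [coversFrac_one_sub_iff]
    simp only [rtrans_eq_mul_singleton]
    rw [show (univ.biUnion fun j => F (q (e j).1) * {(e j).2}) = _ from hU]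
    exact hPY.trans (by gcongr; exact min_le_left _ _)

theorem quasi_tiling {G : Type*} [Group G] (S : Finset G) (hS : IsSymmGen S)
    (F : ℕ → Finset G) (hF : IsFolnerExhaustion S F)
    (ε : ℝ) (hε0 : 0 < ε) (hε1 : ε < 1) (n : ℕ) :
    ∃ (L : ℕ) (δ : ℝ) (s : ℕ) (nidx : Fin s → ℕ), 0 < δ ∧ StrictMono nidx ∧
      (∀ i, n < nidx i) ∧ (∀ i, F (nidx i) ⊆ wball S L) ∧
      ∀ Y : Finset G, Y.Nonempty → ((1 - δ) * (Y.card : ℝ) < ((winter S L Y).card : ℝ)) →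
        ∃ (m : ℕ) (t : Fin m → Fin s) (ctr : Fin m → G),
          (∀ j, ctr j ∈ winter S L Y) ∧
          (∀ j, rtrans (F (nidx (t j))) (ctr j) ⊆ Y) ∧
          EpsDisjoint (Finset.univ : Finset (Fin m))
            (fun j => rtrans (F (nidx (t j))) (ctr j)) ε ∧
          CoversFrac (Finset.univ : Finset (Fin m))
            (fun j => rtrans (F (nidx (t j))) (ctr j)) Y (1 - ε) :=
  quasi_tiling_general S hS F hF ε hε0 n
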